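/- Two permutation matrices x, y (vertices of the Birkhoff polytope B_p) corresponding to permutations σ, τ are adjacent vertices of B_p if and only if σ τ⁻¹ has exactly one cycle of length at least 2. -/

import Mathlib

open Finset

/-- The `p`-th Birkhoff polytope: the set of `p × p` doubly stochastic matrices. -/
def birkhoffPolytope (p : ℕ) : Set (Matrix (Fin p) (Fin p) ℝ) :=
  {x | (∀ i j, 0 ≤ x i j) ∧ (∀ i, ∑ j, x i j = 1) ∧ (∀ j, ∑ i, x i j = 1)}

/-- The permutation matrix of a permutation `σ`. -/
def permMatrix {p : ℕ} (σ : Equiv.Perm (Fin p)) : Matrix (Fin p) (Fin p) ℝ :=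
  fun i j => if σ j = i then 1 else 0

/-!
Write `P` for `permMatrix` and `σ = τ * ρ`, so that `σ * τ⁻¹` is a conjugate of `ρ`.

If `ρ = c * d` with `c`, `d` disjoint and nontrivial, then
`P (τ * c * d) + P τ = P (τ * c) + P (τ * d)`: the midpoint of the segment is also the midpoint of
two permutation matrices off the segment, so the segment is not a face.

If `ρ` is a cycle, a doubly stochastic matrix `x` in a face containing the segment vanishes off
the supports of `P (τ * ρ)` and `P τ`. Column `j` of `x` then lives on rows `τ (ρ j)`, `τ j`, and
row `τ (ρ j)` on columns `j`, `ρ j`; comparing these two sums shows that `j ↦ x (τ j) j` is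
`ρ`-invariant, hence constant on the cycle, and `x` is a convex combination of the endpoints.
-/

open Equiv

namespace Equiv.Perm

variable {α : Type*}

lemma isCycle_conj_iff {ρ g : Perm α} : (g * ρ * g⁻¹).IsCycle ↔ ρ.IsCycle :=
  ⟨fun h => by simpa [mul_assoc] using h.conj (g := g⁻¹), IsCycle.conj⟩

lemma exists_disjoint_mul_eq_of_not_isCycle [Fintype α] [DecidableEq α] {π : Perm α}
    (h1 : π ≠ 1) (hπ : ¬π.IsCycle) :
    ∃ c d : Perm α, c.Disjoint d ∧ c ≠ 1 ∧ d ≠ 1 ∧ c * d = π := by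
  obtain ⟨c, hc⟩ := Finset.nonempty_iff_ne_empty.mpr (cycleFactorsFinset_eq_empty_iff.not.mpr h1)
  have hc_cycle : c.IsCycle := (mem_cycleFactorsFinset_iff.mp hc).1
  refine ⟨π * c⁻¹, c, disjoint_mul_inv_of_mem_cycleFactorsFinset hc, ?_, hc_cycle.ne_one,
    inv_mul_cancel_right π c⟩
  intro h
  rw [mul_inv_eq_one] at h
  exact hπ (h ▸ hc_cycle)

end Equiv.Perm

lemma eq_zero_of_zero_mem_openSegment {u v : ℝ} (hu : 0 ≤ u) (hv : 0 ≤ v)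
    (h : 0 ∈ openSegment ℝ u v) : u = 0 := by
  obtain ⟨a, b, ha, hb, -, hab⟩ := h
  simp only [smul_eq_mul] at hab
  have hau : a * u = 0 := by nlinarith [mul_nonneg ha.le hu, mul_nonneg hb.le hv]
  exact (mul_eq_zero.mp hau).resolve_left ha.ne'

lemma Matrix.apply_mem_segment {m n 𝕜 R : Type*} [Semiring 𝕜] [PartialOrder 𝕜]
    [AddCommMonoid R] [Module 𝕜 R] {x y z : Matrix m n R} (h : z ∈ segment 𝕜 x y) (i : m) (j : n) :
    z i j ∈ segment 𝕜 (x i j) (y i j) := by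
  obtain ⟨a, b, ha, hb, hab, rfl⟩ := h
  exact ⟨a, b, ha, hb, hab, rfl⟩

lemma Matrix.apply_mem_openSegment {m n 𝕜 R : Type*} [Semiring 𝕜] [PartialOrder 𝕜]
    [AddCommMonoid R] [Module 𝕜 R] {x y z : Matrix m n R} (h : z ∈ openSegment 𝕜 x y)
    (i : m) (j : n) : z i j ∈ openSegment 𝕜 (x i j) (y i j) := by
  obtain ⟨a, b, ha, hb, hab, rfl⟩ := h
  exact ⟨a, b, ha, hb, hab, rfl⟩

variable {p : ℕ}

lemma birkhoffPolytope_eq_doublyStochastic :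
    birkhoffPolytope p = doublyStochastic ℝ (Fin p) := by
  ext x
  exact mem_doublyStochastic_iff_sum.symm

lemma convex_birkhoffPolytope : Convex ℝ (birkhoffPolytope p) :=
  birkhoffPolytope_eq_doublyStochastic ▸ convex_doublyStochastic

lemma permMatrix_eq_permMatrix_inv (σ : Perm (Fin p)) : permMatrix σ = σ⁻¹.permMatrix ℝ := by
  ext i j
  simp [permMatrix, PEquiv.toMatrix_apply, Equiv.eq_symm_apply, eq_comm]

lemma permMatrix_mem_extremePoints (σ : Perm (Fin p)) :
    permMatrix σ ∈ (birkhoffPolytope p).extremePoints ℝ := by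
  rw [birkhoffPolytope_eq_doublyStochastic, extremePoints_doublyStochastic,
    permMatrix_eq_permMatrix_inv]
  exact ⟨σ⁻¹, rfl⟩

lemma permMatrix_mem_birkhoffPolytope (σ : Perm (Fin p)) : permMatrix σ ∈ birkhoffPolytope p :=
  extremePoints_subset (permMatrix_mem_extremePoints σ)

lemma permMatrix_injective : Function.Injective (permMatrix : Perm (Fin p) → _) := by
  refine fun σ τ h => Equiv.ext fun j => ?_
  have hj := congrFun (congrFun h (σ j)) j
  simp only [permMatrix, if_true] at hj
  split_ifs at hj with h'
  exacts [h'.symm, absurd hj one_ne_zero]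

lemma eq_or_eq_of_permMatrix_mem_segment {σ τ ρ : Perm (Fin p)}
    (h : permMatrix ρ ∈ segment ℝ (permMatrix σ) (permMatrix τ)) : σ = ρ ∨ τ = ρ := by
  have hρ := (mem_extremePoints_iff_forall_segment.mp (permMatrix_mem_extremePoints ρ)).2 _
    (permMatrix_mem_birkhoffPolytope σ) _ (permMatrix_mem_birkhoffPolytope τ) h
  exact hρ.imp (fun h => permMatrix_injective h) (fun h => permMatrix_injective h)

lemma permMatrix_mul_apply (σ ρ : Perm (Fin p)) (i j : Fin p) :
    permMatrix (σ * ρ) i j = permMatrix σ i (ρ j) :=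
  rfl

lemma permMatrix_mul_mul_add_permMatrix {c d : Perm (Fin p)} (hcd : c.Disjoint d)
    (τ : Perm (Fin p)) :
    permMatrix (τ * c * d) + permMatrix τ = permMatrix (τ * c) + permMatrix (τ * d) := by
  ext i j
  simp only [Matrix.add_apply, permMatrix_mul_apply]
  rcases hcd j with hc | hd
  · have hcd_j : c (d j) = d j := by
      rw [← Perm.mul_apply, hcd.commute.eq, Perm.mul_apply, hc]
    rw [hcd_j, hc, add_comm]
  · rw [hd]

lemma not_isExtreme_segment_permMatrix_mul_mul {c d : Perm (Fin p)} (hcd : c.Disjoint d)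
    (hc : c ≠ 1) (hd : d ≠ 1) (τ : Perm (Fin p)) :
    ¬IsExtreme ℝ (birkhoffPolytope p) (segment ℝ (permMatrix (τ * c * d)) (permMatrix τ)) := by
  intro hext
  have hmid : midpoint ℝ (permMatrix (τ * c * d)) (permMatrix τ) =
      midpoint ℝ (permMatrix (τ * c)) (permMatrix (τ * d)) := by
    rw [midpoint_eq_smul_add, midpoint_eq_smul_add, permMatrix_mul_mul_add_permMatrix hcd]
  have hτc := hext.left_mem_of_mem_openSegment (permMatrix_mem_birkhoffPolytope _)
    (permMatrix_mem_birkhoffPolytope _) (midpoint_mem_segment _ _)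
    (by rw [hmid]; exact midpoint_mem_openSegment _ _)
  rcases eq_or_eq_of_permMatrix_mem_segment hτc with h | h
  · exact hd (by simpa [mul_assoc] using h)
  · exact hc (by simpa using h.symm)

section SegmentSupport

variable {τ ρ : Perm (Fin p)} {x : Matrix (Fin p) (Fin p) ℝ}

lemma apply_self_eq_one_of_support (hx : x ∈ birkhoffPolytope p)
    (hsupp : ∀ i j, τ (ρ j) ≠ i → τ j ≠ i → x i j = 0) {j : Fin p} (hj : ρ j = j) :
    x (τ j) j = 1 := by
  rw [← hx.2.2 j, Fintype.sum_eq_single (τ j)]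
  exact fun i hi => hsupp i j (by rw [hj]; exact hi.symm) hi.symm

lemma col_add_eq_one_of_support (hx : x ∈ birkhoffPolytope p)
    (hsupp : ∀ i j, τ (ρ j) ≠ i → τ j ≠ i → x i j = 0) {j : Fin p} (hj : ρ j ≠ j) :
    x (τ (ρ j)) j + x (τ j) j = 1 := by
  rw [← hx.2.2 j, Fintype.sum_eq_add _ _ (τ.injective.ne hj)]
  exact fun i hi => hsupp i j (Ne.symm hi.1) (Ne.symm hi.2)

lemma row_add_eq_one_of_support (hx : x ∈ birkhoffPolytope p)
    (hsupp : ∀ i j, τ (ρ j) ≠ i → τ j ≠ i → x i j = 0) {j : Fin p} (hj : ρ j ≠ j) :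
    x (τ (ρ j)) j + x (τ (ρ j)) (ρ j) = 1 := by
  rw [← hx.2.1 (τ (ρ j)), Fintype.sum_eq_add _ _ (Ne.symm hj)]
  exact fun k hk => hsupp _ k ((τ.injective.comp ρ.injective).ne hk.1) (τ.injective.ne hk.2)

lemma apply_apply_eq_of_support (hx : x ∈ birkhoffPolytope p)
    (hsupp : ∀ i j, τ (ρ j) ≠ i → τ j ≠ i → x i j = 0) (j : Fin p) :
    x (τ (ρ j)) (ρ j) = x (τ j) j := by
  by_cases hj : ρ j = j
  · rw [hj]
  · linarith [col_add_eq_one_of_support hx hsupp hj, row_add_eq_one_of_support hx hsupp hj]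

lemma eq_of_support_of_apply_eq (hx : x ∈ birkhoffPolytope p)
    (hsupp : ∀ i j, τ (ρ j) ≠ i → τ j ≠ i → x i j = 0) {a : ℝ}
    (ha : ∀ j, ρ j ≠ j → x (τ j) j = a) :
    (1 - a) • permMatrix (τ * ρ) + a • permMatrix τ = x := by
  ext i j
  simp only [Matrix.add_apply, Matrix.smul_apply, smul_eq_mul, permMatrix_mul_apply]
  by_cases hj : ρ j = j
  · rw [hj]
    by_cases hi : τ j = i
    · subst hi
      simp [permMatrix, apply_self_eq_one_of_support hx hsupp hj]
    · simp [permMatrix, hi, hsupp i j (by rwa [hj]) hi]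
  · by_cases hi : τ j = i
    · subst hi
      simp [permMatrix, τ.injective.ne hj, ha j hj]
    · by_cases hi' : τ (ρ j) = i
      · subst hi'
        simp only [permMatrix, ↓reduceIte, mul_one, hi, mul_zero, add_zero]
        linarith [col_add_eq_one_of_support hx hsupp hj, ha j hj]
      · simp [permMatrix, hi, hi', hsupp i j hi' hi]

lemma mem_segment_of_support (hρ : ρ.IsCycle) (hx : x ∈ birkhoffPolytope p)
    (hsupp : ∀ i j, τ (ρ j) ≠ i → τ j ≠ i → x i j = 0) :
    x ∈ segment ℝ (permMatrix (τ * ρ)) (permMatrix τ) := by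
  obtain ⟨j₀, hj₀, -⟩ := id hρ
  have hpow : ∀ n : ℕ, x (τ ((ρ ^ n) j₀)) ((ρ ^ n) j₀) = x (τ j₀) j₀ := by
    intro n
    induction n with
    | zero => rfl
    | succ n ih => rw [pow_succ', Perm.mul_apply, apply_apply_eq_of_support hx hsupp, ih]
  have hconst : ∀ j, ρ j ≠ j → x (τ j) j = x (τ j₀) j₀ := by
    intro j hj
    obtain ⟨n, rfl⟩ := hρ.exists_pow_eq hj₀ hj
    exact hpow n
  have hle : x (τ j₀) j₀ ≤ 1 := by
    linarith [col_add_eq_one_of_support hx hsupp hj₀, hx.1 (τ (ρ j₀)) j₀]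
  exact ⟨1 - x (τ j₀) j₀, x (τ j₀) j₀, by linarith, hx.1 _ _, by ring,
    eq_of_support_of_apply_eq hx hsupp hconst⟩

end SegmentSupport

lemma isExtreme_segment_permMatrix_mul_of_isCycle {ρ : Perm (Fin p)} (hρ : ρ.IsCycle)
    (τ : Perm (Fin p)) :
    IsExtreme ℝ (birkhoffPolytope p) (segment ℝ (permMatrix (τ * ρ)) (permMatrix τ)) := by
  refine ⟨convex_birkhoffPolytope.segment_subset (permMatrix_mem_birkhoffPolytope _)
    (permMatrix_mem_birkhoffPolytope _), fun x₁ hx₁ x₂ hx₂ z hz hzx => ?_⟩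
  refine mem_segment_of_support hρ hx₁ fun i j hτρ hτ => ?_
  have hz : z i j = 0 := by
    simpa [permMatrix, hτρ, hτ] using Matrix.apply_mem_segment hz i j
  exact eq_zero_of_zero_mem_openSegment (hx₁.1 i j) (hx₂.1 i j)
    (hz ▸ Matrix.apply_mem_openSegment hzx i j)

lemma isExtreme_segment_permMatrix_mul_iff (τ ρ : Perm (Fin p)) :
    (permMatrix (τ * ρ) ≠ permMatrix τ ∧
        IsExtreme ℝ (birkhoffPolytope p) (segment ℝ (permMatrix (τ * ρ)) (permMatrix τ))) ↔
      ρ.IsCycle := by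
  refine ⟨fun ⟨hne, hext⟩ => ?_, fun hρ => ⟨?_, isExtreme_segment_permMatrix_mul_of_isCycle hρ τ⟩⟩
  · have hρ1 : ρ ≠ 1 := by
      rintro rfl
      exact hne (by rw [mul_one])
    by_contra hρ
    obtain ⟨c, d, hcd, hc, hd, rfl⟩ := Perm.exists_disjoint_mul_eq_of_not_isCycle hρ1 hρ
    rw [← mul_assoc] at hext
    exact not_isExtreme_segment_permMatrix_mul_mul hcd hc hd τ hext
  · intro h
    exact hρ.ne_one (mul_eq_left.mp (permMatrix_injective h))

/-- Two permutation matrices are adjacent vertices of the Birkhoff polytope (i.e. the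
segment joining them is an edge of `B_p` and they are distinct) iff `σ τ⁻¹` has
exactly one cycle of length at least two, i.e. `σ τ⁻¹` is a cycle. -/
theorem birkhoffPolytope_adjacency (p : ℕ) (σ τ : Equiv.Perm (Fin p)) :
    (permMatrix σ ≠ permMatrix τ ∧
        IsExtreme ℝ (birkhoffPolytope p) (segment ℝ (permMatrix σ) (permMatrix τ))) ↔
      (σ * τ⁻¹).IsCycle := by
  obtain ⟨ρ, rfl⟩ : ∃ ρ, σ = τ * ρ := ⟨τ⁻¹ * σ, (mul_inv_cancel_left τ σ).symm⟩
  exact (isExtreme_segment_permMatrix_mul_iff τ ρ).trans Perm.isCycle_conj_iff.symm
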